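/- arXiv:2208.03747 — 3 statements merged into one kernel-verified Lean document; each statement's English description precedes it below -/
import Mathlib

section
/- Let F be a smooth function and Q a smooth function of p satisfying Q'(p0) = 0 and (f∂_p)^2 Q = Q at p = p0 for a smooth function f. Then for every odd positive integer l, (f ∂_p)^l (F∘Q) evaluated at p = p0 equals 0. -/
/-- Auxiliary predicate: `g` is a finite sum of terms
`c * F^{(m)}(Q p) * (Q p)^a * (V p)^b` with `b ≡ l [MOD 2]`. -/
inductive GoodAux (F Q V : ℝ → ℝ) : ℕ → (ℝ → ℝ) → Prop where
  | base (c : ℝ) (m a b l : ℕ) (hpar : b % 2 = l % 2) :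
      GoodAux F Q V l (fun p => c * iteratedDeriv m F (Q p) * Q p ^ a * V p ^ b)
  | add {l : ℕ} {g h : ℝ → ℝ} : GoodAux F Q V l g → GoodAux F Q V l h →
      GoodAux F Q V l (fun p => g p + h p)

lemma GoodAux.smooth {F Q V : ℝ → ℝ} (hF : ContDiff ℝ ((⊤:ℕ∞):WithTop ℕ∞) F)
    (hQ : ContDiff ℝ ((⊤:ℕ∞):WithTop ℕ∞) Q) (hV : ContDiff ℝ ((⊤:ℕ∞):WithTop ℕ∞) V) {l : ℕ} {g : ℝ → ℝ} (hg : GoodAux F Q V l g) :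
    ContDiff ℝ ((⊤:ℕ∞):WithTop ℕ∞) g := by
  induction hg with
  | base c m a b l hpar =>
      have hFm : ContDiff ℝ ((⊤:ℕ∞):WithTop ℕ∞) (iteratedDeriv m F) := by
        rw [iteratedDeriv_eq_iterate]; exact hF.iterate_deriv m
      exact ((contDiff_const.mul (hFm.comp hQ)).mul (hQ.pow a)).mul (hV.pow b)
  | add _ _ ih1 ih2 => exact ih1.add ih2

lemma GoodAux.step {f F Q V : ℝ → ℝ} (hF : ContDiff ℝ ((⊤:ℕ∞):WithTop ℕ∞) F)
    (hQ : ContDiff ℝ ((⊤:ℕ∞):WithTop ℕ∞) Q) (hV : ContDiff ℝ ((⊤:ℕ∞):WithTop ℕ∞) V)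
    (hFQ : ∀ p, f p * deriv Q p = V p) (hFV : ∀ p, f p * deriv V p = Q p)
    {l : ℕ} {g : ℝ → ℝ} (hg : GoodAux F Q V l g) :
    GoodAux F Q V (l + 1) (fun p => f p * deriv g p) := by
  induction hg with
  | base c m a b l hpar =>
      have key : (fun p => f p * deriv (fun p => c * iteratedDeriv m F (Q p) * Q p ^ a * V p ^ b) p)
          = fun p => (c * iteratedDeriv (m+1) F (Q p) * Q p ^ a * V p ^ (b+1))
            + (((c * a) * iteratedDeriv m F (Q p) * Q p ^ (a-1) * V p ^ (b+1))
            + ((c * b) * iteratedDeriv m F (Q p) * Q p ^ (a+1) * V p ^ (if b = 0 then 1 else b-1))) := by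
        funext p
        have hQd : HasDerivAt Q (deriv Q p) p :=
          ((hQ.differentiable (by simp)) p).hasDerivAt
        have hVd : HasDerivAt V (deriv V p) p :=
          ((hV.differentiable (by simp)) p).hasDerivAt
        have hFm : ContDiff ℝ ((⊤:ℕ∞):WithTop ℕ∞) (iteratedDeriv m F) := by
          rw [iteratedDeriv_eq_iterate]; exact hF.iterate_deriv m
        have hFmd : HasDerivAt (iteratedDeriv m F) (iteratedDeriv (m+1) F (Q p)) (Q p) := by
          rw [iteratedDeriv_succ]
          exact ((hFm.differentiable (by simp)) (Q p)).hasDerivAt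
        have hcomp : HasDerivAt (fun p => iteratedDeriv m F (Q p))
            (iteratedDeriv (m+1) F (Q p) * deriv Q p) p := hFmd.comp p hQd
        have hprod : HasDerivAt (fun p => c * iteratedDeriv m F (Q p) * Q p ^ a * V p ^ b)
            (((c * (iteratedDeriv (m+1) F (Q p) * deriv Q p)) * Q p ^ a
              + (c * iteratedDeriv m F (Q p)) * ((a : ℝ) * Q p ^ (a-1) * deriv Q p)) * V p ^ b
              + (c * iteratedDeriv m F (Q p) * Q p ^ a) * ((b : ℝ) * V p ^ (b-1) * deriv V p)) p :=
          ((hcomp.const_mul c).mul (hQd.pow a)).mul (hVd.pow b)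
        rw [hprod.deriv]
        rcases b with _ | n
        · simp only [pow_zero, Nat.cast_zero, if_pos rfl, Nat.zero_sub]
          push_cast
          linear_combination (c * iteratedDeriv (m+1) F (Q p) * Q p ^ a
            + c * (a : ℝ) * iteratedDeriv m F (Q p) * Q p ^ (a-1)) * hFQ p
        · simp only [Nat.succ_sub_one, if_neg (Nat.succ_ne_zero n)]
          push_cast
          linear_combination (c * iteratedDeriv (m+1) F (Q p) * Q p ^ a * V p ^ (n+1)
            + c * (a : ℝ) * iteratedDeriv m F (Q p) * Q p ^ (a-1) * V p ^ (n+1)) * hFQ p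
            + (c * ((n : ℝ) + 1) * iteratedDeriv m F (Q p) * Q p ^ a * V p ^ n) * hFV p
      rw [key]
      refine .add (.base c (m+1) a (b+1) (l+1) (by omega)) (.add ?_ ?_)
      · exact .base (c * a) m (a-1) (b+1) (l+1) (by omega)
      · exact .base (c * b) m (a+1) (if b = 0 then 1 else b-1) (l+1) (by split <;> omega)
  | add hg1 hg2 ih1 ih2 =>
      rename_i l' g₁ g₂
      have d1 := (hg1.smooth hF hQ hV).differentiable (by simp)
      have d2 := (hg2.smooth hF hQ hV).differentiable (by simp)
      have : (fun p => f p * deriv (fun p => g₁ p + g₂ p) p)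
          = fun p => (f p * deriv g₁ p) + (f p * deriv g₂ p) := by
        funext p
        rw [deriv_fun_add (d1 p) (d2 p)]
        ring
      rw [this]
      exact ih1.add ih2

lemma GoodAux.vanish {F Q V : ℝ → ℝ} {p0 : ℝ} (hV0 : V p0 = 0)
    {l : ℕ} (hl : l % 2 = 1) {g : ℝ → ℝ} (hg : GoodAux F Q V l g) : g p0 = 0 := by
  induction hg with
  | base c m a b l hpar =>
      have hb : b ≠ 0 := by omega
      simp [hV0, zero_pow hb]
  | add _ _ ih1 ih2 => simp [ih1 hl, ih2 hl]

/-- Let `F` and `Q` be smooth functions with `Q'(p0) = 0` and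
`(f∂_p)² Q = Q` (at `p0`, as an identity of functions) for a smooth function `f`.
Then for every odd positive integer `l`, `(f ∂_p)^l (F∘Q)` vanishes at `p = p0`.
Here `(f∂_p)` is the operator `g ↦ f·g'`. -/
theorem odd_iterates_vanish (f F Q : ℝ → ℝ) (p0 : ℝ)
    (hf : ContDiff ℝ (⊤ : ℕ∞) f) (hF : ContDiff ℝ (⊤ : ℕ∞) F) (hQ : ContDiff ℝ (⊤ : ℕ∞) Q)
    (hQ' : deriv Q p0 = 0)
    (hODE : (fun p => f p * deriv (fun q => f q * deriv Q q) p) = Q) :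
    ∀ l : ℕ, Odd l →
      ((fun g : ℝ → ℝ => fun p => f p * deriv g p)^[l] (F ∘ Q)) p0 = 0 := by
  set V : ℝ → ℝ := fun p => f p * deriv Q p with hVdef
  have hf' : ContDiff ℝ ((⊤:ℕ∞):WithTop ℕ∞) f := hf.of_le (by simp)
  have hF' : ContDiff ℝ ((⊤:ℕ∞):WithTop ℕ∞) F := hF.of_le (by simp)
  have hQ'' : ContDiff ℝ ((⊤:ℕ∞):WithTop ℕ∞) Q := hQ.of_le (by simp)
  have hQderiv : ContDiff ℝ ((⊤:ℕ∞):WithTop ℕ∞) (deriv Q) := (contDiff_infty_iff_deriv.mp hQ'').2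
  have hV : ContDiff ℝ ((⊤:ℕ∞):WithTop ℕ∞) V := hf'.mul hQderiv
  have hFQ : ∀ p, f p * deriv Q p = V p := fun p => rfl
  have hFV : ∀ p, f p * deriv V p = Q p := fun p => congrFun hODE p
  have hV0 : V p0 = 0 := by simp [hVdef, hQ']
  have hbase : GoodAux F Q V 0 (F ∘ Q) := by
    have : (F ∘ Q) = fun p => (1 : ℝ) * iteratedDeriv 0 F (Q p) * Q p ^ 0 * V p ^ 0 := by
      funext p; simp [iteratedDeriv_zero]
    rw [this]
    exact .base 1 0 0 0 0 rfl
  have hgood : ∀ l : ℕ, GoodAux F Q V l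
      ((fun g : ℝ → ℝ => fun p => f p * deriv g p)^[l] (F ∘ Q)) := by
    intro l
    induction l with
    | zero => exact hbase
    | succ n ih =>
        rw [Function.iterate_succ_apply']
        exact ih.step hF' hQ'' hV hFQ hFV
  intro l hl
  exact (hgood l).vanish hV0 (Nat.odd_iff.mp hl)
end

section
/- Let p(κ) = e^κ √(b(b-a)) + b and q(λ) = e^λ √(b(b-a)) - b, and p0 = p(0), q0 = q(0). Then the formal power series identity (p0+q0)/(p(κ)+q(λ)) = Σ_{γ=0}^∞ (κλ/4)^γ exp(Σ_{r≥1} (γ s_r - b_r)(κ^r + λ^r)) holds, where Σ_r s_r κ^r = ln[(2/κ)(e^κ-1)/(e^κ+1)] and Σ_r b_r κ^r = ln[(e^κ+1)/2]. -/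
open Complex

/-- The analytic extension of `κ ↦ (2/κ)(e^κ-1)/(e^κ+1)` to `κ = 0` (value `1`);
its logarithm has Taylor expansion `Σ_{r≥1} s_r κ^r`, so near `0` one has
`exp(Σ_r s_r κ^r) = sGenFun κ`. -/
noncomputable def sGenFun (κ : ℂ) : ℂ :=
  if κ = 0 then 1 else (2 / κ) * (Complex.exp κ - 1) / (Complex.exp κ + 1)

/-- The function `(e^κ+1)/2`, whose logarithm has Taylor expansion `Σ_{r≥1} b_r κ^r`,
so near `0` one has `exp(Σ_r b_r κ^r) = bGenFun κ`. -/
noncomputable def bGenFun (κ : ℂ) : ℂ := (Complex.exp κ + 1) / 2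

lemma half_mul_sGen (κ : ℂ) :
    κ / 2 * sGenFun κ = (Complex.exp κ - 1) / (Complex.exp κ + 1) := by
  rw [sGenFun]
  split_ifs with h
  · simp [h, Complex.exp_zero]
  · rw [mul_div_assoc, ← mul_assoc]
    have : κ / 2 * (2 / κ) = 1 := by field_simp
    rw [this, one_mul]

lemma exp_abs_bounds {κ : ℂ} (hκ : ‖κ‖ < 1 / 2) :
    ‖Complex.exp κ - 1‖ < 1 ∧ 1 < ‖Complex.exp κ + 1‖ := by
  have h1 : ‖Complex.exp κ - 1‖ ≤ 2 * ‖κ‖ :=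
    Complex.norm_exp_sub_one_le (by linarith)
  have h2 : (2 : ℝ) ≤ ‖Complex.exp κ + 1‖ + ‖Complex.exp κ - 1‖ := by
    have : ((Complex.exp κ + 1) - (Complex.exp κ - 1)) = 2 := by ring
    calc (2 : ℝ) = ‖(Complex.exp κ + 1) - (Complex.exp κ - 1)‖ := by
          rw [this]; simp
      _ ≤ _ := norm_sub_le _ _
  constructor <;> linarith

/-- With `p(κ) = e^κ √(b(b-a)) + b`, `q(λ) = e^λ √(b(b-a)) - b`,
`p0 = p(0)`, `q0 = q(0)`, the (formal power series, i.e. local analytic) identity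
`(p0+q0)/(p(κ)+q(λ)) = Σ_{γ≥0} (κλ/4)^γ exp(Σ_{r≥1} (γ s_r - b_r)(κ^r + λ^r))`
holds, where `Σ_r s_r κ^r = ln[(2/κ)(e^κ-1)/(e^κ+1)]` and `Σ_r b_r κ^r = ln[(e^κ+1)/2]`;
here `exp(Σ_{r≥1} (γ s_r - b_r)(κ^r + λ^r)) = sGenFun(κ)^γ sGenFun(λ)^γ / (bGenFun(κ) bGenFun(λ))`. -/
theorem tau_expansion_identity (a b s : ℂ) (hb : b * (b - a) ≠ 0)
    (hs : s ^ 2 = b * (b - a)) :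
    ∃ ε > (0 : ℝ), ∀ κ μ : ℂ, ‖κ‖ < ε → ‖μ‖ < ε →
      ((Complex.exp 0 * s + b) + (Complex.exp 0 * s - b))
          / ((Complex.exp κ * s + b) + (Complex.exp μ * s - b))
        = ∑' γ : ℕ, (κ * μ / 4) ^ γ *
            ((sGenFun κ * sGenFun μ) ^ γ / (bGenFun κ * bGenFun μ)) := by
  have hs0 : s ≠ 0 := by
    intro h; apply hb; rw [← hs, h]; ring
  refine ⟨1 / 2, by norm_num, fun κ μ hκ hμ => ?_⟩
  set x : ℂ := (Complex.exp κ - 1) / (Complex.exp κ + 1) with hx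
  set y : ℂ := (Complex.exp μ - 1) / (Complex.exp μ + 1) with hy
  obtain ⟨hκn, hκd⟩ := exp_abs_bounds hκ
  obtain ⟨hμn, hμd⟩ := exp_abs_bounds hμ
  have hDκ : Complex.exp κ + 1 ≠ 0 := by
    intro h; rw [h] at hκd; simp at hκd; linarith
  have hDμ : Complex.exp μ + 1 ≠ 0 := by
    intro h; rw [h] at hμd; simp at hμd; linarith
  have hxlt : ‖x‖ < 1 := by
    rw [hx, norm_div]
    rw [div_lt_one (by linarith)]
    linarith
  have hylt : ‖y‖ < 1 := by
    rw [hy, norm_div]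
    rw [div_lt_one (by linarith)]
    linarith
  have hxy : ‖x * y‖ < 1 := by
    rw [norm_mul]
    nlinarith [norm_nonneg x, norm_nonneg y]
  have hterm : ∀ γ : ℕ, (κ * μ / 4) ^ γ *
      ((sGenFun κ * sGenFun μ) ^ γ / (bGenFun κ * bGenFun μ))
      = (x * y) ^ γ * (bGenFun κ * bGenFun μ)⁻¹ := by
    intro γ
    have hxyeq : x * y = κ * μ / 4 * (sGenFun κ * sGenFun μ) := by
      rw [hx, hy, ← half_mul_sGen κ, ← half_mul_sGen μ]; ring
    rw [div_eq_mul_inv ((sGenFun κ * sGenFun μ) ^ γ) (bGenFun κ * bGenFun μ),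
      ← mul_assoc, ← mul_pow, ← hxyeq]
  have hgeom : ∑' γ : ℕ, (κ * μ / 4) ^ γ *
      ((sGenFun κ * sGenFun μ) ^ γ / (bGenFun κ * bGenFun μ))
      = (1 - x * y)⁻¹ * (bGenFun κ * bGenFun μ)⁻¹ := by
    simp_rw [hterm]
    rw [tsum_mul_right, tsum_geometric_of_norm_lt_one hxy]
  rw [hgeom]
  have hone : (1 : ℂ) - x * y ≠ 0 := by
    intro h
    have h1 : x * y = 1 := by linear_combination -h
    rw [h1] at hxy
    norm_num at hxy
  have hB : bGenFun κ * bGenFun μ ≠ 0 := by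
    rw [bGenFun, bGenFun]
    field_simp
    exact div_ne_zero (mul_ne_zero hDκ hDμ) (by norm_num)
  have key : (1 - x * y) * (bGenFun κ * bGenFun μ) = (Complex.exp κ + Complex.exp μ) / 2 := by
    rw [bGenFun, bGenFun, hx, hy]
    field_simp
    ring
  have hsum : Complex.exp κ + Complex.exp μ ≠ 0 := by
    have hne := mul_ne_zero hone hB
    rw [key] at hne
    intro h
    rw [h] at hne
    simp at hne
  rw [← mul_inv, key]
  rw [Complex.exp_zero]
  have hden : Complex.exp κ * s + b + (Complex.exp μ * s - b) ≠ 0 := by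
    have h2 : Complex.exp κ * s + b + (Complex.exp μ * s - b)
        = s * (Complex.exp κ + Complex.exp μ) := by ring
    rw [h2]; exact mul_ne_zero hs0 hsum
  rw [inv_div, div_eq_div_iff hden hsum]
  ring
end

section
/- Let m^{(n,k,l)} = (i p/(p+q)) (-p/q)^n (-(p-a)/(q+a))^k (-(p-b)/(q+b))^l e^{ξ+η}, φ^{(n,k,l)} = p^n (p-a)^k (p-b)^l e^{ξ}, ψ^{(n,k,l)} = (-q)^{-n}(-(q+a))^{-k}(-(q+b))^{-l} e^{η}, where ξ = x_{-1}/p + p x_1 + t_a/(p-a) + t_b/(p-b) + ξ0 and η = x_{-1}/q + q x_1 + t_a/(q+a) + t_b/(q+b) + η0. Then ∂_{x_1} m^{(n,k,l)} = i φ^{(n+1,k,l)} ψ^{(n,k,l)} and m^{(n+1,k,l)} = m^{(n,k,l)} + i φ^{(n+1,k,l)} ψ^{(n+1,k,l)}. -/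
open Complex

noncomputable section

/-- `ξ = x_{-1}/p + p x_1 + t_a/(p-a) + t_b/(p-b) + ξ0`. -/
def xiFun (p a b ξ0 : ℂ) (x1 xm1 ta tb : ℝ) : ℂ :=
  (xm1 : ℂ) / p + p * (x1 : ℂ) + (ta : ℂ) / (p - a) + (tb : ℂ) / (p - b) + ξ0

/-- `η = x_{-1}/q + q x_1 + t_a/(q+a) + t_b/(q+b) + η0`. -/
def etaFun (q a b η0 : ℂ) (x1 xm1 ta tb : ℝ) : ℂ :=
  (xm1 : ℂ) / q + q * (x1 : ℂ) + (ta : ℂ) / (q + a) + (tb : ℂ) / (q + b) + η0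

/-- `m^{(n,k,l)} = (ip/(p+q)) (-p/q)^n (-(p-a)/(q+a))^k (-(p-b)/(q+b))^l e^{ξ+η}`. -/
def mFun (p q a b ξ0 η0 : ℂ) (n k l : ℤ) (x1 xm1 ta tb : ℝ) : ℂ :=
  (Complex.I * p / (p + q)) * (-p / q) ^ n * (-(p - a) / (q + a)) ^ k
    * (-(p - b) / (q + b)) ^ l
    * Complex.exp (xiFun p a b ξ0 x1 xm1 ta tb + etaFun q a b η0 x1 xm1 ta tb)

/-- `φ^{(n,k,l)} = p^n (p-a)^k (p-b)^l e^{ξ}`. -/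
def phiFun (p a b ξ0 : ℂ) (n k l : ℤ) (x1 xm1 ta tb : ℝ) : ℂ :=
  p ^ n * (p - a) ^ k * (p - b) ^ l * Complex.exp (xiFun p a b ξ0 x1 xm1 ta tb)

/-- `ψ^{(n,k,l)} = (-q)^{-n} (-(q+a))^{-k} (-(q+b))^{-l} e^{η}`. -/
def psiFun (q a b η0 : ℂ) (n k l : ℤ) (x1 xm1 ta tb : ℝ) : ℂ :=
  (-q) ^ (-n) * (-(q + a)) ^ (-k) * (-(q + b)) ^ (-l)
    * Complex.exp (etaFun q a b η0 x1 xm1 ta tb)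

end

/-- With `m^{(n,k,l)}`, `φ^{(n,k,l)}`, `ψ^{(n,k,l)}` as above, one has
`∂_{x_1} m^{(n,k,l)} = i φ^{(n+1,k,l)} ψ^{(n,k,l)}` and
`m^{(n+1,k,l)} = m^{(n,k,l)} + i φ^{(n+1,k,l)} ψ^{(n+1,k,l)}`. -/
theorem mFun_deriv_and_shift (p q a b ξ0 η0 : ℂ)
    (hpq : p + q ≠ 0) (hpq' : p * q ≠ 0)
    (hpa : (p - a) * (q + a) ≠ 0) (hpb : (p - b) * (q + b) ≠ 0)
    (n k l : ℤ) (x1 xm1 ta tb : ℝ) :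
    HasDerivAt (fun y : ℝ => mFun p q a b ξ0 η0 n k l y xm1 ta tb)
      (Complex.I * phiFun p a b ξ0 (n + 1) k l x1 xm1 ta tb
        * psiFun q a b η0 n k l x1 xm1 ta tb) x1 ∧
    mFun p q a b ξ0 η0 (n + 1) k l x1 xm1 ta tb
      = mFun p q a b ξ0 η0 n k l x1 xm1 ta tb
        + Complex.I * phiFun p a b ξ0 (n + 1) k l x1 xm1 ta tb
          * psiFun q a b η0 (n + 1) k l x1 xm1 ta tb := by
  have hp : p ≠ 0 := fun h => hpq' (by simp [h])
  have hq : q ≠ 0 := fun h => hpq' (by simp [h])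
  have hpa1 : p - a ≠ 0 := fun h => hpa (by simp [h])
  have hqa : q + a ≠ 0 := fun h => hpa (by simp [h])
  have hpb1 : p - b ≠ 0 := fun h => hpb (by simp [h])
  have hqb : q + b ≠ 0 := fun h => hpb (by simp [h])
  have hqa' : -(q + a) ≠ 0 := neg_ne_zero.2 hqa
  have hqb' : -(q + b) ≠ 0 := neg_ne_zero.2 hqb
  have hq' : -q ≠ 0 := neg_ne_zero.2 hq
  have e1 : ∀ m : ℤ, (-p / q) ^ m = p ^ m * (-q) ^ (-m) := fun m => by
    rw [neg_div, ← div_neg, div_zpow, zpow_neg, div_eq_mul_inv]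
  have e2 : ∀ m : ℤ, (-(p - a) / (q + a)) ^ m = (p - a) ^ m * (-(q + a)) ^ (-m) := fun m => by
    rw [neg_div, ← div_neg, div_zpow, zpow_neg, div_eq_mul_inv]
  have e3 : ∀ m : ℤ, (-(p - b) / (q + b)) ^ m = (p - b) ^ m * (-(q + b)) ^ (-m) := fun m => by
    rw [neg_div, ← div_neg, div_zpow, zpow_neg, div_eq_mul_inv]
  have hpow : p ^ (n + 1) = p ^ n * p := zpow_add_one₀ hp n
  have hpowq : (-q) ^ (-(n + 1)) = (-q) ^ (-n) * (-q)⁻¹ := by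
    rw [neg_add, zpow_add₀ hq', zpow_neg_one]
  have hQn : (-q) ^ (-n) ≠ 0 := zpow_ne_zero _ hq'
  have hKa : (-(q + a)) ^ (-k) ≠ 0 := zpow_ne_zero _ hqa'
  have hKb : (-(q + b)) ^ (-l) ≠ 0 := zpow_ne_zero _ hqb'
  have hPn : p ^ n ≠ 0 := zpow_ne_zero _ hp
  constructor
  · -- derivative part
    set D : ℂ := (xm1 : ℂ) / p + (ta : ℂ) / (p - a) + (tb : ℂ) / (p - b) + ξ0
      + ((xm1 : ℂ) / q + (ta : ℂ) / (q + a) + (tb : ℂ) / (q + b) + η0) with hD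
    have hxi : ∀ y : ℝ, xiFun p a b ξ0 y xm1 ta tb + etaFun q a b η0 y xm1 ta tb
        = (p + q) * (y : ℂ) + D := by
      intro y; simp only [xiFun, etaFun, hD]; ring
    have h1 : HasDerivAt (fun y : ℝ => (y : ℂ)) 1 x1 := Complex.ofRealCLM.hasDerivAt
    have h2 : HasDerivAt (fun y : ℝ => Complex.exp ((p + q) * (y : ℂ) + D))
        ((p + q) * Complex.exp ((p + q) * (x1 : ℂ) + D)) x1 := by
      have := ((h1.const_mul (p + q)).add_const D).cexp
      simpa [mul_comm] using this
    have hd : HasDerivAt (fun y : ℝ =>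
        Complex.exp (xiFun p a b ξ0 y xm1 ta tb + etaFun q a b η0 y xm1 ta tb))
        ((p + q) * Complex.exp (xiFun p a b ξ0 x1 xm1 ta tb + etaFun q a b η0 x1 xm1 ta tb)) x1 := by
      simp only [hxi]; exact h2
    have hd2 := hd.const_mul (Complex.I * p / (p + q) * (-p / q) ^ n
      * (-(p - a) / (q + a)) ^ k * (-(p - b) / (q + b)) ^ l)
    have heq : Complex.I * p / (p + q) * (-p / q) ^ n
        * (-(p - a) / (q + a)) ^ k * (-(p - b) / (q + b)) ^ l
        * ((p + q) * Complex.exp (xiFun p a b ξ0 x1 xm1 ta tb + etaFun q a b η0 x1 xm1 ta tb))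
        = Complex.I * phiFun p a b ξ0 (n + 1) k l x1 xm1 ta tb
          * psiFun q a b η0 n k l x1 xm1 ta tb := by
      simp only [phiFun, psiFun, Complex.exp_add, e1, e2, e3, hpow]
      generalize p ^ n = P
      generalize (-q) ^ (-n) = Q
      generalize (p - a) ^ k = Ka
      generalize (-(q + a)) ^ (-k) = Ka'
      generalize (p - b) ^ l = Kb
      generalize (-(q + b)) ^ (-l) = Kb'
      field_simp
    rw [← heq]
    exact hd2
  · simp only [mFun, phiFun, psiFun, Complex.exp_add, e1, e2, e3, hpow, hpowq]
    generalize p ^ n = P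
    generalize (-q) ^ (-n) = Q
    generalize (p - a) ^ k = Ka
    generalize (-(q + a)) ^ (-k) = Ka'
    generalize (p - b) ^ l = Kb
    generalize (-(q + b)) ^ (-l) = Kb'
    field_simp
    ring
end
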